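/- Let P be a finite PIP. The maximal faces of ⊞_P (under the face-containment order) are exactly the faces C(↓A, A) where A is a maximal consistent antichain of P (maximal under inclusion among consistent antichains) and ↓A is the downset generated by A. Hence A ↦ C(↓A, A) is a bijection from facets of Δ_P to facets of ⊞_P. -/

import Mathlib

/-! A maximal face `(I, M)` must have `M = max I`, hence `I = ↓M` with `M` a consistent
antichain. If some `b` extended `M`, take `c` minimal outside `↓M` with `c ≤ b`: its strict lower
bounds lie in `↓M`, and it is consistent with `↓M` because inconsistency is inherited upward along
`c ≤ b`, so `(↓M ∪ {c}, M ∪ {c})` is a strictly larger face. Conversely, the top part of a face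
above `(↓A, A)` is a consistent antichain containing `A`, so maximality of `A` pins the face down
to `(↓A, A)`. -/

open Finset

variable {P : Type*} [Fintype P] [DecidableEq P] [PartialOrder P]

/-- A subset is consistent if it contains no inconsistent pair. -/
def Consistent (incons : P → P → Prop) (S : Finset P) : Prop :=
  ∀ a ∈ S, ∀ b ∈ S, ¬ incons a b

/-- A downset (order ideal). -/
def IsDownset (I : Finset P) : Prop :=
  ∀ x ∈ I, ∀ y, y ≤ x → y ∈ I

open Classical in
/-- The maximal elements of a finite set. -/
noncomputable def maxElems (I : Finset P) : Finset P :=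
  I.filter (fun x => ∀ y ∈ I, ¬ x < y)

open Classical in
/-- The downset generated by a set. -/
noncomputable def downGen (A : Finset P) : Finset P :=
  Finset.univ.filter (fun x => ∃ a ∈ A, x ≤ a)

/-- A consistent antichain: the faces of the crossing complex `Δ_P`. -/
def ConsAntichain (incons : P → P → Prop) (A : Finset P) : Prop :=
  (∀ a ∈ A, ∀ b ∈ A, a ≠ b → ¬ a ≤ b) ∧ Consistent incons A

/-- A face of the cubical complex `⊞_P`: a pair (I, M) with I a consistent
downset and M ⊆ max I. -/
def IsFace (incons : P → P → Prop) (I M : Finset P) : Prop :=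
  IsDownset I ∧ Consistent incons I ∧ M ⊆ maxElems I

/-- The face-containment order on faces of `⊞_P`:
`C(I',M') ⊆ C(I,M)` iff `M' ⊆ M` and `I \ M ⊆ I' ⊆ I`. -/
def FaceLE (p q : Finset P × Finset P) : Prop :=
  p.2 ⊆ q.2 ∧ q.1 \ q.2 ⊆ p.1 ∧ p.1 ⊆ q.1

section

variable {α : Type*} {incons : α → α → Prop}

lemma Consistent.mono {S T : Finset α} (hT : Consistent incons T) (hST : S ⊆ T) :
    Consistent incons S :=
  fun a ha b hb => hT a (hST ha) b (hST hb)

lemma faceLE_insert [DecidableEq α] (I M : Finset α) (c : α) :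
    FaceLE (I, M) (insert c I, insert c M) := by
  refine ⟨subset_insert c M, fun x hx => ?_, subset_insert c I⟩
  obtain ⟨hxI, hxM⟩ := mem_sdiff.mp hx
  exact (mem_insert.mp hxI).resolve_left fun hxc => hxM (hxc ▸ mem_insert_self c M)

variable [PartialOrder α]

lemma ConsAntichain.isAntichain {A : Finset α} (hA : ConsAntichain incons A) :
    IsAntichain (· ≤ ·) (A : Set α) :=
  hA.1

lemma ConsAntichain.mono {A B : Finset α} (hB : ConsAntichain incons B) (hAB : A ⊆ B) :
    ConsAntichain incons A :=
  ⟨hB.isAntichain.subset (coe_subset.mpr hAB), hB.2.mono hAB⟩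

lemma IsDownset.insert [DecidableEq α] {I : Finset α} (hI : IsDownset I) {c : α}
    (hc : ∀ x < c, x ∈ I) : IsDownset (insert c I) := by
  intro x hx y hyx
  rcases mem_insert.mp hx with rfl | hxI
  · obtain rfl | hlt := hyx.eq_or_lt
    · exact mem_insert_self y I
    · exact mem_insert_of_mem (hc y hlt)
  · exact mem_insert_of_mem (hI x hxI y hyx)

variable [Fintype α]

lemma mem_downGen {A : Finset α} {x : α} : x ∈ downGen A ↔ ∃ a ∈ A, x ≤ a := by
  simp [downGen]

lemma subset_downGen (A : Finset α) : A ⊆ downGen A :=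
  fun a ha => mem_downGen.mpr ⟨a, ha, le_rfl⟩

lemma isDownset_downGen (A : Finset α) : IsDownset (downGen A) := by
  intro x hx y hyx
  obtain ⟨a, ha, hxa⟩ := mem_downGen.mp hx
  exact mem_downGen.mpr ⟨a, ha, hyx.trans hxa⟩

lemma Consistent.downGen
    (hup : ∀ a b a' b', incons a b → a ≤ a' → b ≤ b' → incons a' b')
    {A : Finset α} (hA : Consistent incons A) : Consistent incons (downGen A) := by
  intro x hx y hy hxy
  obtain ⟨a, ha, hxa⟩ := mem_downGen.mp hx
  obtain ⟨b, hb, hyb⟩ := mem_downGen.mp hy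
  exact hA a ha b hb (hup x y a b hxy hxa hyb)

end

variable {incons : P → P → Prop}

lemma mem_maxElems {I : Finset P} {x : P} :
    x ∈ maxElems I ↔ x ∈ I ∧ ∀ y ∈ I, ¬ x < y := by
  simp [maxElems]

lemma maxElems_subset (I : Finset P) : maxElems I ⊆ I :=
  fun _ hx => (mem_maxElems.mp hx).1

lemma exists_mem_maxElems_le {I : Finset P} {x : P} (hx : x ∈ I) :
    ∃ m ∈ maxElems I, x ≤ m := by
  obtain ⟨m, hxm, hm⟩ := I.exists_le_maximal hx
  exact ⟨m, mem_maxElems.mpr ⟨hm.prop, fun _ hy => hm.not_gt hy⟩, hxm⟩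

lemma IsDownset.downGen_maxElems {I : Finset P} (hI : IsDownset I) :
    downGen (maxElems I) = I := by
  ext x
  refine ⟨fun hx => ?_, fun hx => ?_⟩
  · obtain ⟨m, hm, hxm⟩ := mem_downGen.mp hx
    exact hI m (maxElems_subset I hm) x hxm
  · obtain ⟨m, hm, hxm⟩ := exists_mem_maxElems_le hx
    exact mem_downGen.mpr ⟨m, hm, hxm⟩

lemma mem_maxElems_insert {I : Finset P} (hI : IsDownset I) {c : P} (hc : c ∉ I) :
    c ∈ maxElems (insert c I) := by
  refine mem_maxElems.mpr ⟨mem_insert_self c I, fun y hy hcy => ?_⟩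
  rcases mem_insert.mp hy with rfl | hyI
  · exact lt_irrefl y hcy
  · exact hc (hI y hyI c hcy.le)

lemma mem_maxElems_of_subset_downGen {A I : Finset P} (hA : IsAntichain (· ≤ ·) (A : Set P))
    (hI : I ⊆ downGen A) {a : P} (haA : a ∈ A) (haI : a ∈ I) : a ∈ maxElems I := by
  refine mem_maxElems.mpr ⟨haI, fun y hy hay => ?_⟩
  obtain ⟨a', ha', hya'⟩ := mem_downGen.mp (hI hy)
  exact hA.not_lt haA ha' (hay.trans_le hya')

lemma maxElems_downGen {A : Finset P} (hA : IsAntichain (· ≤ ·) (A : Set P)) :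
    maxElems (downGen A) = A := by
  refine subset_antisymm (fun x hx => ?_) fun a ha =>
    mem_maxElems_of_subset_downGen hA subset_rfl ha (subset_downGen A ha)
  obtain ⟨hxI, hxmax⟩ := mem_maxElems.mp hx
  obtain ⟨a, ha, hxa⟩ := mem_downGen.mp hxI
  obtain rfl | hlt := hxa.eq_or_lt
  · exact ha
  · exact absurd hlt (hxmax a (subset_downGen A ha))

lemma Consistent.consAntichain_maxElems {I : Finset P} (hI : Consistent incons I) :
    ConsAntichain incons (maxElems I) :=
  ⟨fun _ ha b hb hab hle =>
      (mem_maxElems.mp ha).2 b (maxElems_subset I hb) (lt_of_le_of_ne hle hab),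
    hI.mono (maxElems_subset I)⟩

lemma IsFace.consAntichain {I M : Finset P} (h : IsFace incons I M) : ConsAntichain incons M :=
  h.2.1.consAntichain_maxElems.mono h.2.2

lemma IsFace.maxElems {I M : Finset P} (h : IsFace incons I M) :
    IsFace incons I (maxElems I) :=
  ⟨h.1, h.2.1, subset_rfl⟩

lemma faceLE_maxElems {I M : Finset P} (hM : M ⊆ maxElems I) :
    FaceLE (I, M) (I, maxElems I) :=
  ⟨hM, sdiff_subset, subset_rfl⟩

lemma isFace_downGen (hup : ∀ a b a' b', incons a b → a ≤ a' → b ≤ b' → incons a' b')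
    {A : Finset P} (hA : ConsAntichain incons A) : IsFace incons (downGen A) A :=
  ⟨isDownset_downGen A, hA.2.downGen hup, (maxElems_downGen hA.isAntichain).ge⟩

/-- If `b` extends the consistent antichain `M`, the face `(↓M, M)` is not maximal. -/
lemma exists_isFace_insert_downGen
    (hup : ∀ a b a' b', incons a b → a ≤ a' → b ≤ b' → incons a' b')
    {M : Finset P} {b : P} (hbM : b ∉ M) (hMb : ConsAntichain incons (insert b M)) :
    ∃ c ∉ downGen M, IsFace incons (insert c (downGen M)) (insert c M) := by
  have hb : b ∉ downGen M := fun hb => by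
    obtain ⟨m, hm, hbm⟩ := mem_downGen.mp hb
    exact hbM (hMb.isAntichain.eq (mem_insert_self b M) (mem_insert_of_mem hm) hbm ▸ hm)
  obtain ⟨c, hcb, hc⟩ := (downGen M)ᶜ.exists_le_minimal (mem_compl.mpr hb)
  have hcM : c ∉ downGen M := mem_compl.mp hc.prop
  have hbelow : ∀ x < c, x ∈ downGen M := fun x hxc =>
    not_not.mp fun hx => hc.not_lt (mem_compl.mpr hx) hxc
  have hsub : insert c (downGen M) ⊆ downGen (insert b M) :=
    insert_subset (mem_downGen.mpr ⟨b, mem_insert_self b M, hcb⟩)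
      fun x hx => by
        obtain ⟨m, hm, hxm⟩ := mem_downGen.mp hx
        exact mem_downGen.mpr ⟨m, mem_insert_of_mem hm, hxm⟩
  refine ⟨c, hcM, (isDownset_downGen M).insert hbelow, (hMb.2.downGen hup).mono hsub, ?_⟩
  refine insert_subset (mem_maxElems_insert (isDownset_downGen M) hcM) fun m hm => ?_
  exact mem_maxElems_of_subset_downGen hMb.isAntichain hsub (mem_insert_of_mem hm)
    (mem_insert_of_mem (subset_downGen M hm))

theorem maximal_faces_are_maximal_antichains_general (incons : P → P → Prop)
    (hup : ∀ a b a' b', incons a b → a ≤ a' → b ≤ b' → incons a' b') :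
    ∀ I M : Finset P,
      (IsFace incons I M ∧
        ∀ I' M' : Finset P, IsFace incons I' M' →
          FaceLE (I, M) (I', M') → I = I' ∧ M = M') ↔
      (ConsAntichain incons M ∧
        (∀ B : Finset P, ConsAntichain incons B → M ⊆ B → M = B) ∧
        I = downGen M) := by
  intro I M
  constructor
  · rintro ⟨hface, hmax⟩
    have hM : M = maxElems I := (hmax I _ hface.maxElems (faceLE_maxElems hface.2.2)).2
    have hI : I = downGen M := hM ▸ hface.1.downGen_maxElems.symm
    refine ⟨hface.consAntichain, fun B hB hMB => ?_, hI⟩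
    by_contra hne
    obtain ⟨b, hbB, hbM⟩ := exists_of_ssubset (ssubset_of_subset_of_ne hMB hne)
    obtain ⟨c, hc, hface'⟩ :=
      exists_isFace_insert_downGen hup hbM (hB.mono (insert_subset hbB hMB))
    rw [← hI] at hc hface'
    exact hc ((hmax _ _ hface' (faceLE_insert I M c)).1 ▸ mem_insert_self c I)
  · rintro ⟨hA, hmaxA, rfl⟩
    refine ⟨isFace_downGen hup hA, fun I' M' hface' hle => ?_⟩
    obtain rfl := hmaxA M' hface'.consAntichain hle.1
    have hI' : I' ⊆ M ∪ downGen M := sdiff_le_iff.mp hle.2.1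
    rw [union_eq_right.mpr (subset_downGen M)] at hI'
    exact ⟨subset_antisymm hle.2.2 hI', rfl⟩

/-- The maximal faces of `⊞_P` are exactly the faces `C(↓A, A)` with `A` a
maximal consistent antichain of `P`; hence `A ↦ C(↓A, A)` is a bijection from
facets of `Δ_P` to facets of `⊞_P`. -/
theorem maximal_faces_are_maximal_antichains (incons : P → P → Prop)
    (hirr : ∀ a, ¬ incons a a)
    (hsymm : ∀ a b, incons a b → incons b a)
    (hup : ∀ a b a' b', incons a b → a ≤ a' → b ≤ b' → incons a' b') :
    ∀ I M : Finset P,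
      (IsFace incons I M ∧
        ∀ I' M' : Finset P, IsFace incons I' M' →
          FaceLE (I, M) (I', M') → I = I' ∧ M = M') ↔
      (ConsAntichain incons M ∧
        (∀ B : Finset P, ConsAntichain incons B → M ⊆ B → M = B) ∧
        I = downGen M) :=
  maximal_faces_are_maximal_antichains_general incons hup
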